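/- Let R be a commutative ring and S a multiplicative subset of R. Every S-injective R-module is u-S-injective; that is, if M is an R-module containing an injective R-submodule Q with sM ⊆ Q for some s ∈ S, then for every R-module N the group Ext¹_R(N, M) is annihilated by some element of S. -/

import Mathlib

open CategoryTheory

universe u

/-- Extension along an exact pair into an injective module. -/
lemma extend_along_exact {R : Type u} [CommRing R]
    {A B C Qt : Type u} [AddCommGroup A] [AddCommGroup B] [AddCommGroup C] [AddCommGroup Qt]
    [Module R A] [Module R B] [Module R C] [Module R Qt]
    (hQ : Module.Injective R Qt)
    (f : A →ₗ[R] B) (g : B →ₗ[R] C)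
    (hex : LinearMap.ker g ≤ LinearMap.range f)
    (u : B →ₗ[R] Qt) (hu : ∀ a, u (f a) = 0) :
    ∃ v : C →ₗ[R] Qt, ∀ b, v (g b) = u b := by
  have hker : LinearMap.ker g ≤ LinearMap.ker u := by
    intro b hb
    obtain ⟨a, rfl⟩ := hex hb
    simpa using hu a
  let u' : (B ⧸ LinearMap.ker g) →ₗ[R] Qt := Submodule.liftQ _ u hker
  let e := g.quotKerEquivRange
  let w : LinearMap.range g →ₗ[R] Qt := u' ∘ₗ (e.symm : _ →ₗ[R] _)
  obtain ⟨v, hv⟩ := hQ.out (LinearMap.range g).subtype (Submodule.injective_subtype _) w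
  refine ⟨v, fun b => ?_⟩
  have h1 : (⟨g b, LinearMap.mem_range_self g b⟩ : LinearMap.range g)
      = e (Submodule.Quotient.mk b) := by
    apply Subtype.ext
    simp [e, LinearMap.quotKerEquivRange_apply_mk]
  have h2 : v (g b) = w ⟨g b, LinearMap.mem_range_self g b⟩ :=
    hv ⟨g b, LinearMap.mem_range_self g b⟩
  rw [h2, h1]
  show u' (e.symm (e (Submodule.Quotient.mk b))) = u b
  rw [LinearEquiv.symm_apply_apply]
  rfl

/-- The `n`-th Ext group of two `A`-modules, as an `A`-module. -/
noncomputable def extMod (A : Type u) [CommRing A] (n : ℕ) (M N : ModuleCat.{u} A) :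
    ModuleCat A :=
  ((Ext A (ModuleCat.{u} A) n).obj (Opposite.op M)).obj N

/-- Every `S`-injective module is `u`-`S`-injective: if `M` contains an injective
submodule `Q` with `s • M ⊆ Q` for some `s ∈ S`, then for every `R`-module `N` the
group `Ext¹_R(N, M)` is annihilated by some element of `S`. -/
theorem uS_injective_of_S_injective
    (R : Type u) [CommRing R] (S : Submonoid R)
    (M : Type u) [AddCommGroup M] [Module R M]
    (Q : Submodule R M) (hQ : Module.Injective R Q)
    (hs : ∃ s ∈ S, ∀ m : M, s • m ∈ Q) :
    ∀ N : ModuleCat.{u} R, ∃ s ∈ S,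
      ∀ x : extMod R 1 N (ModuleCat.of R M), s • x = 0 := by
  obtain ⟨s, hsS, hsQ⟩ := hs
  intro N
  refine ⟨s, hsS, fun x => ?_⟩
  obtain ⟨P⟩ : Nonempty (ProjectiveResolution N) := HasProjectiveResolution.out
  let M' : ModuleCat.{u} R := ModuleCat.of R M
  let K := P.complex.linearYonedaObj R M'
  let S1 := K.sc' 0 1 2
  let E : extMod R 1 N M' ≅
      ModuleCat.of R (LinearMap.ker S1.g.hom ⧸ LinearMap.range S1.moduleCatToCycles) :=
    P.isoExt 1 M' ≪≫ ShortComplex.homologyMapIso (K.isoSc' 0 1 2 (by simp) (by simp))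
      ≪≫ S1.moduleCatHomologyIso
  have hinj : Function.Injective E.hom :=
    (ModuleCat.mono_iff_injective E.hom).1 inferInstance
  apply hinj
  rw [map_smul, map_zero]
  obtain ⟨z, hz⟩ := Submodule.Quotient.mk_surjective _ (E.hom x)
  rw [← hz, ← Submodule.Quotient.mk_smul, Submodule.Quotient.mk_eq_zero]
  -- z : LinearMap.ker S1.g, with S1.g = K.d 1 2
  let φ : P.complex.X 1 ⟶ M' := z.1
  have hφ : P.complex.d 2 1 ≫ φ = 0 := z.2
  -- exactness of the projective resolution at 1
  have hPex : (P.complex.sc' 2 1 0).Exact :=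
    (P.complex.exactAt_iff' 2 1 0 (by simp) (by simp)).1 (P.complex_exactAt_succ 0)
  have hker := (ShortComplex.moduleCat_exact_iff_ker_sub_range _).1 hPex
  -- the map p : M → Q, m ↦ s • m
  let p : M →ₗ[R] Q := LinearMap.codRestrict Q (s • LinearMap.id) (fun m => hsQ m)
  have hpi : ∀ m : M, (Q.subtype (p m)) = s • m := fun m => rfl
  -- extend p ∘ φ along the exact pair
  obtain ⟨v, hv⟩ := extend_along_exact hQ (P.complex.d 2 1).hom (P.complex.d 1 0).hom hker
    (p ∘ₗ (φ.hom : P.complex.X 1 →ₗ[R] M)) (fun a => by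
      have : φ (P.complex.d 2 1 a) = 0 := by
        have := congrArg (fun h => h a) hφ
        simpa using this
      exact (congrArg p this).trans (map_zero p))
  let ψ : P.complex.X 0 ⟶ M' := ModuleCat.ofHom (Q.subtype ∘ₗ v)
  refine ⟨ψ, Subtype.ext ?_⟩
  show S1.f ψ = s • z.1
  have : P.complex.d 1 0 ≫ ψ = s • φ := by
    ext b
    show ψ (P.complex.d 1 0 b) = (s • φ) b
    show Q.subtype (v (P.complex.d 1 0 b)) = (s • φ) b
    rw [hv b]
    show Q.subtype (p (φ b)) = (s • φ) b
    rw [hpi]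
    rfl
  exact this
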